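/- For every n ≥ 0, Σ_{j=0}^{n} m(j)·φ(n−j) = (2n+1)·φ(n), i.e. Σ_{j=0}^{n} m(j)·(2(n−j)−1)!! = (2n+1)!!. -/

import Mathlib

/-!
With `Φ = ∑ φ(n) Xⁿ` and `Ψ = ∑ φ(n + 1) Xⁿ`, the relation `φ(n + 1) = (2n + 1) φ(n)` reads
`Φ = 1 + X Ψ` and `Ψ = Φ + 2 X Φ'`, and the claim is `M Φ = Ψ` for `M = ∑ m(n) Xⁿ`.
The recursion for `m` says exactly that `M = 1 + X (M² + M + 2 X M')`, and it determines `M`.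
A direct computation with the two relations shows that the quotient `Ψ / Φ` satisfies the same
equation, hence equals `M`.
-/

/-- `φ(n) = (2n−1)!! = (2n)!/(2^n·n!)` (the division is exact). -/
def phi (n : ℕ) : ℕ := (2 * n).factorial / (2 ^ n * n.factorial)

open Finset PowerSeries

open scoped Nat

theorem phi_succ_eq_doubleFactorial (n : ℕ) : phi (n + 1) = (2 * n + 1)‼ := by
  have h := Nat.factorial_eq_mul_doubleFactorial (2 * n + 1)
  rw [show 2 * n + 1 + 1 = 2 * (n + 1) by ring, Nat.doubleFactorial_two_mul] at h
  rw [phi, h, Nat.mul_div_cancel_left _ (by positivity)]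

theorem phi_succ (n : ℕ) : phi (n + 1) = (2 * n + 1) * phi n := by
  cases n with
  | zero => rfl
  | succ n =>
    rw [phi_succ_eq_doubleFactorial, phi_succ_eq_doubleFactorial,
      show 2 * (n + 1) + 1 = 2 * n + 1 + 2 by ring, Nat.doubleFactorial_add_two]

theorem PowerSeries.coeff_X_mul_derivative {R : Type*} [CommSemiring R] (f : R⟦X⟧) (n : ℕ) :
    coeff n (X * d⁄dX R f) = n * coeff n f := by
  cases n with
  | zero => simp
  | succ n => rw [coeff_succ_X_mul, coeff_derivative, mul_comm]; push_cast; rfl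

section MapsRecursion

variable {R : Type*} [CommSemiring R]

def SatisfiesMapsRecursion (a : ℕ → R) : Prop :=
  a 0 = 1 ∧ ∀ n, a (n + 1) = ∑ k ∈ range (n + 1), a k * a (n - k) + (2 * n + 1) * a n

theorem SatisfiesMapsRecursion.unique {a b : ℕ → R} (ha : SatisfiesMapsRecursion a)
    (hb : SatisfiesMapsRecursion b) : a = b := by
  funext n
  induction n using Nat.strong_induction_on with
  | _ n ih =>
    cases n with
    | zero => rw [ha.1, hb.1]
    | succ n =>
      rw [ha.2, hb.2, ih n n.lt_succ_self, sum_congr rfl fun k hk => by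
        rw [ih k (mem_range.1 hk), ih (n - k) (Nat.sub_lt_succ n k)]]

theorem satisfiesMapsRecursion_coeff {F : R⟦X⟧}
    (hF : F = 1 + X * (F ^ 2 + F + 2 * (X * d⁄dX R F))) :
    SatisfiesMapsRecursion fun n => coeff n F := by
  refine ⟨by simpa using congrArg (coeff 0) hF, fun n => ?_⟩
  have h := congrArg (coeff (n + 1)) hF
  rw [map_add, coeff_succ_X_mul, map_add, map_add, ← map_ofNat C 2, coeff_C_mul,
    coeff_X_mul_derivative, pow_two, coeff_mul, Nat.sum_antidiagonal_eq_sum_range_succ_mk,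
    coeff_one, if_neg n.succ_ne_zero, zero_add] at h
  dsimp only
  rw [h]
  ring

end MapsRecursion

theorem PowerSeries.maps_equation_of_mul_eq {R : Type*} [CommRing R] [IsDomain R]
    {Φ Ψ N : R⟦X⟧} (hΦ : Φ = 1 + X * Ψ) (hΨ : Ψ = Φ + 2 * (X * d⁄dX R Φ)) (hN : N * Φ = Ψ) :
    N = 1 + X * (N ^ 2 + N + 2 * (X * d⁄dX R N)) := by
  have hΦ' : d⁄dX R Φ = Ψ + X * d⁄dX R Ψ := by
    conv_lhs => rw [hΦ]
    simp [add_comm]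
  have hN' : d⁄dX R N * Φ + N * d⁄dX R Φ = d⁄dX R Ψ := by
    rw [← hN, Derivation.leibniz, smul_eq_mul, smul_eq_mul]; ring
  have hΦ0 : Φ ^ 2 ≠ 0 := by
    refine pow_ne_zero 2 fun h => ?_
    simpa [h] using congrArg constantCoeff hΦ
  refine mul_left_cancel₀ hΦ0 ?_
  -- Multiplied by `Φ²`, the equation no longer involves `N` once `N Φ = Ψ` and its derivative
  -- are substituted; what remains is a consequence of `hΦ`, `hΨ` and the derivative of `hΦ`.
  linear_combination (Φ - X * (N * Φ + Ψ) - X * Φ + 2 * X ^ 2 * d⁄dX R Φ) * hN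
    - 2 * X ^ 2 * Φ * hN' + (Φ - X * Ψ) * hΨ + 2 * X * Φ * hΦ'

theorem maps_convolution_double_factorial
    (m : ℕ → ℕ) (hm0 : m 0 = 1)
    (hm : ∀ n : ℕ, m (n + 1) =
      (∑ k ∈ Finset.range (n + 1), m k * m (n - k)) + (2 * (n + 1) - 1) * m n) :
    ∀ n : ℕ, (∑ j ∈ Finset.range (n + 1), m j * phi (n - j)) = (2 * n + 1) * phi n := by
  set Φ : ℚ⟦X⟧ := mk fun n => (phi n : ℚ)
  set Ψ : ℚ⟦X⟧ := mk fun n => (phi (n + 1) : ℚ)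
  have hΦ : Φ = 1 + X * Ψ := by
    ext (_ | n) <;> simp [Φ, Ψ, coeff_one, phi]
  have hΨ : Ψ = Φ + 2 * (X * d⁄dX ℚ Φ) := by
    ext n
    rw [map_add, ← map_ofNat C 2, coeff_C_mul, coeff_X_mul_derivative]
    simp only [Φ, Ψ, coeff_mk, phi_succ]
    push_cast; ring
  obtain ⟨N, hN⟩ : ∃ N, N * Φ = Ψ :=
    ⟨Ψ * Φ⁻¹, by rw [mul_assoc, PowerSeries.inv_mul_cancel _ (by simp [Φ, phi]), mul_one]⟩
  have hm_rec : SatisfiesMapsRecursion fun n => (m n : ℚ) := by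
    refine ⟨by simp [hm0], fun n => ?_⟩
    dsimp only
    rw [hm n, show 2 * (n + 1) - 1 = 2 * n + 1 by omega]
    push_cast; rfl
  have hmN : ∀ k, (m k : ℚ) = coeff k N :=
    congrFun (hm_rec.unique (satisfiesMapsRecursion_coeff (maps_equation_of_mul_eq hΦ hΨ hN)))
  intro n
  have h := congrArg (coeff n) hN
  rw [coeff_mul, Nat.sum_antidiagonal_eq_sum_range_succ_mk] at h
  simp only [Φ, Ψ, coeff_mk, phi_succ, ← hmN] at h
  exact_mod_cast h
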